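/- arXiv:1803.01829 — 3 statements merged into one kernel-verified Lean document; each statement's English description precedes it below -/
import Mathlib

section
/- Let g ∈ ℝⁿ with g ≠ 0, μ > 0, σ > 0, x ∈ ℝⁿ, and x_c = x − (1/μ)·g. Suppose v ∈ ℝⁿ satisfies ‖v‖₂ ≥ σ and ‖(x + v) − x_c‖₂ ≤ ‖x − x_c‖₂ = ‖g‖₂/μ. Then the angle between v and −g satisfies cos∠(v, −g) ≥ σ·μ/(2·‖g‖₂), i.e., (−g)ᵀv ≥ (σ·μ/2)·‖v‖₂. -/
/-!
Expanding `‖v + μ⁻¹ • g‖² ≤ ‖μ⁻¹ • g‖²` gives `‖v‖² ≤ 2μ⁻¹⟪-g, v⟫`, and `σ‖v‖ ≤ ‖v‖²`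
because `‖v‖ ≥ σ`.
-/

open scoped RealInnerProductSpace

section BallGeometry

variable {E : Type*} [NormedAddCommGroup E] [InnerProductSpace ℝ E]

theorem sq_norm_le_neg_two_mul_inner_of_norm_add_le {v w : E} (h : ‖v + w‖ ≤ ‖w‖) :
    ‖v‖ ^ 2 ≤ -(2 * ⟪v, w⟫) := by
  have hsq : ‖v + w‖ ^ 2 ≤ ‖w‖ ^ 2 := pow_le_pow_left₀ (norm_nonneg _) h 2
  rw [norm_add_sq_real] at hsq
  linarith

theorem mul_sq_norm_le_inner_neg_of_norm_add_inv_smul_le {μ : ℝ} (hμ : 0 < μ) {g v : E}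
    (h : ‖v + μ⁻¹ • g‖ ≤ ‖μ⁻¹ • g‖) :
    μ / 2 * ‖v‖ ^ 2 ≤ ⟪-g, v⟫ := by
  have key := sq_norm_le_neg_two_mul_inner_of_norm_add_le h
  rw [real_inner_smul_right, real_inner_comm] at key
  rw [inner_neg_left]
  calc μ / 2 * ‖v‖ ^ 2 ≤ μ / 2 * -(2 * (μ⁻¹ * ⟪g, v⟫)) := by gcongr
    _ = -⟪g, v⟫ := by field_simp

end BallGeometry

theorem stmt6_general {n : ℕ}
    (g : EuclideanSpace ℝ (Fin n))
    (μ σ : ℝ) (hμ : 0 < μ)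
    (x v : EuclideanSpace ℝ (Fin n))
    (xc : EuclideanSpace ℝ (Fin n)) (hxc : xc = x - (1 / μ) • g)
    (hv : ‖v‖ ≥ σ)
    (hball : ‖(x + v) - xc‖ ≤ ‖x - xc‖) :
    (inner ℝ (-g) v : ℝ) ≥ σ * μ / 2 * ‖v‖ := by
  subst hxc
  rw [one_div, add_sub_sub_cancel, sub_sub_cancel] at hball
  have hσv : σ * ‖v‖ ≤ ‖v‖ ^ 2 := by
    rw [sq]
    exact mul_le_mul_of_nonneg_right hv (norm_nonneg v)
  calc σ * μ / 2 * ‖v‖ = μ / 2 * (σ * ‖v‖) := by ring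
    _ ≤ μ / 2 * ‖v‖ ^ 2 := mul_le_mul_of_nonneg_left hσv (by positivity)
    _ ≤ ⟪-g, v⟫ := mul_sq_norm_le_inner_neg_of_norm_add_inv_smul_le hμ hball

/-- geometric core of the sufficient-descent-direction lemma: a vector v of
length at least σ ending inside the large ball around x_c = x − μ⁻¹g makes an angle with −g
bounded away from π/2: (−g)ᵀv ≥ (σμ/2)‖v‖. -/
theorem stmt6 {n : ℕ}
    (g : EuclideanSpace ℝ (Fin n)) (hg : g ≠ 0)
    (μ σ : ℝ) (hμ : 0 < μ) (hσ : 0 < σ)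
    (x v : EuclideanSpace ℝ (Fin n))
    (xc : EuclideanSpace ℝ (Fin n)) (hxc : xc = x - (1 / μ) • g)
    (hv : ‖v‖ ≥ σ)
    (hball : ‖(x + v) - xc‖ ≤ ‖x - xc‖) :
    (inner ℝ (-g) v : ℝ) ≥ σ * μ / 2 * ‖v‖ :=
  stmt6_general g μ σ hμ x v xc hxc hv hball
end

section
/- Fix τ with 0 < τ < 1/2 and define the iteration x_{k+1} = 1 − τ/(2·x_k) with x_0 = 1/2. Then the sequence {x_k} converges monotonically to x* = 1/2 + √(1/4 − τ/2), and the convergence is exactly linear: |x_{k+1} − x*| / |x_k − x*| → τ/(2·(x*)²) as k → ∞, a limit strictly between 0 and 1; in particular, the convergence rate is not superlinear. -/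
/-!
Since `x*` is a fixed point of `g y = 1 - τ / (2 y)`, the error obeys the exact relation
`g y - x* = ρ(y) (y - x*)` with `ρ(y) = τ / (2 y x*)`. Starting below `x*` at a point `y₀` with
`τ < 2 y₀ x*`, the factor `ρ` stays in `(0, 1)`, so the iterates increase, stay below `x*` and
converge geometrically; the ratio of successive errors is exactly `ρ(x k)`, which tends to
`ρ(x*) = τ / (2 x*²)`.
-/

open Filter Topology

section ConvexifiedStep

variable {τ xstar : ℝ}

theorem step_sub_fixedPoint (hfix : xstar ^ 2 = xstar - τ / 2) {y : ℝ} (hy : y ≠ 0)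
    (hs : xstar ≠ 0) :
    1 - τ / (2 * y) - xstar = τ / (2 * y * xstar) * (y - xstar) := by
  field_simp
  linear_combination -2 * y * hfix

theorem abs_step_sub_fixedPoint_div (hτ : 0 < τ) (hfix : xstar ^ 2 = xstar - τ / 2) {y : ℝ}
    (hy : 0 < y) (hs : 0 < xstar) (hys : y ≠ xstar) :
    |1 - τ / (2 * y) - xstar| / |y - xstar| = τ / (2 * y * xstar) := by
  have hne : |y - xstar| ≠ 0 := abs_ne_zero.2 (sub_ne_zero.2 hys)
  rw [step_sub_fixedPoint hfix hy.ne' hs.ne', abs_mul, abs_of_pos (by positivity), mul_div_assoc,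
    div_self hne, mul_one]

theorem step_mem_Ico (hτ : 0 < τ) (hfix : xstar ^ 2 = xstar - τ / 2) {y : ℝ} (hy : 0 < y)
    (hys : y < xstar) (hτy : τ ≤ 2 * y * xstar) :
    1 - τ / (2 * y) ∈ Set.Ico y xstar := by
  have hs : 0 < xstar := hy.trans hys
  have hρ_pos : 0 < τ / (2 * y * xstar) := by positivity
  have hρ_le : τ / (2 * y * xstar) ≤ 1 := (div_le_one (by positivity)).2 hτy
  have herr := step_sub_fixedPoint hfix hy.ne' hs.ne'
  refine ⟨?_, ?_⟩ <;> nlinarith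

variable {x : ℕ → ℝ}

theorem iterate_mem_Ico (hτ : 0 < τ) (hfix : xstar ^ 2 = xstar - τ / 2)
    (hrec : ∀ k, x (k + 1) = 1 - τ / (2 * x k)) (hx0 : 0 < x 0) (hx0s : x 0 < xstar)
    (hτx0 : τ ≤ 2 * x 0 * xstar) (k : ℕ) :
    x k ∈ Set.Ico (x 0) xstar := by
  induction k with
  | zero => exact ⟨le_rfl, hx0s⟩
  | succ k ih =>
    have hτxk : τ ≤ 2 * x k * xstar := by nlinarith [ih.1]
    have hstep := step_mem_Ico hτ hfix (hx0.trans_le ih.1) ih.2 hτxk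
    rw [hrec]
    exact ⟨ih.1.trans hstep.1, hstep.2⟩

theorem monotone_iterate (hτ : 0 < τ) (hfix : xstar ^ 2 = xstar - τ / 2)
    (hrec : ∀ k, x (k + 1) = 1 - τ / (2 * x k)) (hx0 : 0 < x 0) (hx0s : x 0 < xstar)
    (hτx0 : τ ≤ 2 * x 0 * xstar) :
    Monotone x := by
  refine monotone_nat_of_le_succ fun k => ?_
  obtain ⟨hx0k, hxks⟩ := iterate_mem_Ico hτ hfix hrec hx0 hx0s hτx0 k
  have hτxk : τ ≤ 2 * x k * xstar := by nlinarith
  rw [hrec]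
  exact (step_mem_Ico hτ hfix (hx0.trans_le hx0k) hxks hτxk).1

theorem abs_iterate_sub_fixedPoint_le (hτ : 0 < τ) (hfix : xstar ^ 2 = xstar - τ / 2)
    (hrec : ∀ k, x (k + 1) = 1 - τ / (2 * x k)) (hx0 : 0 < x 0) (hx0s : x 0 < xstar)
    (hτx0 : τ ≤ 2 * x 0 * xstar) (k : ℕ) :
    |x k - xstar| ≤ (τ / (2 * x 0 * xstar)) ^ k * |x 0 - xstar| := by
  have hs : 0 < xstar := hx0.trans hx0s
  refine le_geom (u := fun k => |x k - xstar|) (by positivity) k fun j _ => ?_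
  obtain ⟨hx0j, -⟩ := iterate_mem_Ico hτ hfix hrec hx0 hx0s hτx0 j
  have hxj : 0 < x j := hx0.trans_le hx0j
  calc |x (j + 1) - xstar| = τ / (2 * x j * xstar) * |x j - xstar| := by
        rw [hrec, step_sub_fixedPoint hfix hxj.ne' hs.ne', abs_mul, abs_of_pos (by positivity)]
    _ ≤ τ / (2 * x 0 * xstar) * |x j - xstar| := by gcongr

theorem tendsto_iterate_fixedPoint (hτ : 0 < τ) (hfix : xstar ^ 2 = xstar - τ / 2)
    (hrec : ∀ k, x (k + 1) = 1 - τ / (2 * x k)) (hx0 : 0 < x 0) (hx0s : x 0 < xstar)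
    (hτx0 : τ < 2 * x 0 * xstar) :
    Tendsto x atTop (𝓝 xstar) := by
  have hs : 0 < xstar := hx0.trans hx0s
  have hq : τ / (2 * x 0 * xstar) < 1 := (div_lt_one (by positivity)).2 hτx0
  have hgeom : Tendsto (fun k => (τ / (2 * x 0 * xstar)) ^ k * |x 0 - xstar|) atTop (𝓝 0) := by
    simpa using (tendsto_pow_atTop_nhds_zero_of_lt_one (by positivity) hq).mul_const
      |x 0 - xstar|
  refine tendsto_iff_norm_sub_tendsto_zero.2 ?_
  simp only [Real.norm_eq_abs]
  exact squeeze_zero (fun _ => abs_nonneg _)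
    (abs_iterate_sub_fixedPoint_le hτ hfix hrec hx0 hx0s hτx0.le) hgeom

theorem tendsto_abs_iterate_sub_fixedPoint_ratio (hτ : 0 < τ)
    (hfix : xstar ^ 2 = xstar - τ / 2) (hrec : ∀ k, x (k + 1) = 1 - τ / (2 * x k))
    (hx0 : 0 < x 0) (hx0s : x 0 < xstar) (hτx0 : τ < 2 * x 0 * xstar) :
    Tendsto (fun k => |x (k + 1) - xstar| / |x k - xstar|) atTop
      (𝓝 (τ / (2 * xstar ^ 2))) := by
  have hs : 0 < xstar := hx0.trans hx0s
  have hratio (k : ℕ) : |x (k + 1) - xstar| / |x k - xstar| = τ / (2 * x k * xstar) := by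
    obtain ⟨hx0k, hxks⟩ := iterate_mem_Ico hτ hfix hrec hx0 hx0s hτx0.le k
    rw [hrec]
    exact abs_step_sub_fixedPoint_div hτ hfix (hx0.trans_le hx0k) hs hxks.ne
  have hlim := tendsto_iterate_fixedPoint hτ hfix hrec hx0 hx0s hτx0
  simp only [hratio, sq, ← mul_assoc]
  exact tendsto_const_nhds.div ((tendsto_const_nhds.mul hlim).mul tendsto_const_nhds)
    (by positivity)

end ConvexifiedStep

/-- the convexified-model iteration x_{k+1} = 1 − τ/(2 x_k) with x_0 = 1/2
converges monotonically to x* = 1/2 + √(1/4 − τ/2) at an exactly linear rate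
τ/(2(x*)²) ∈ (0,1); in particular convergence is not superlinear. -/
theorem stmt9 (τ : ℝ) (hτ0 : 0 < τ) (hτ1 : τ < 1 / 2)
    (x : ℕ → ℝ) (hx0 : x 0 = 1 / 2)
    (hrec : ∀ k, x (k + 1) = 1 - τ / (2 * x k))
    (xstar : ℝ) (hxstar : xstar = 1 / 2 + Real.sqrt (1 / 4 - τ / 2)) :
    Monotone x ∧
    Tendsto x atTop (nhds xstar) ∧
    Tendsto (fun k => |x (k + 1) - xstar| / |x k - xstar|) atTop
      (nhds (τ / (2 * xstar ^ 2))) ∧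
    0 < τ / (2 * xstar ^ 2) ∧ τ / (2 * xstar ^ 2) < 1 := by
  have hroot_pos : 0 < Real.sqrt (1 / 4 - τ / 2) := Real.sqrt_pos.2 (by linarith)
  have hroot_sq : Real.sqrt (1 / 4 - τ / 2) ^ 2 = 1 / 4 - τ / 2 := Real.sq_sqrt (by linarith)
  have hfix : xstar ^ 2 = xstar - τ / 2 := by rw [hxstar]; linear_combination hroot_sq
  have hhalf : 1 / 2 < xstar := by rw [hxstar]; linarith
  have hx0pos : 0 < x 0 := by rw [hx0]; norm_num
  have hx0s : x 0 < xstar := by rw [hx0]; exact hhalf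
  have hτx0 : τ < 2 * x 0 * xstar := by rw [hx0]; linarith
  refine ⟨monotone_iterate hτ0 hfix hrec hx0pos hx0s hτx0.le,
    tendsto_iterate_fixedPoint hτ0 hfix hrec hx0pos hx0s hτx0,
    tendsto_abs_iterate_sub_fixedPoint_ratio hτ0 hfix hrec hx0pos hx0s hτx0, by positivity, ?_⟩
  rw [div_lt_one (by positivity)]
  linarith
end

section
/- Let K be the symmetric block matrix K = [[Q, Gᵀ], [G, −D]] where Q ∈ ℝⁿˣⁿ and D ∈ ℝᵐˣᵐ are both symmetric positive definite and G ∈ ℝᵐˣⁿ. Then K is invertible, and cond₂(K) = ‖K‖₂·‖K⁻¹‖₂ ≤ (‖Q⁻¹‖₂ + ‖D⁻¹‖₂)·‖K‖₂. -/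
/-!
Write `x = (u, v)` and flip the sign of the second block, `x' = (u, -v)`. The off-diagonal blocks
`Gᵀ` and `G` then cancel: `⟪x', K x⟫ = uᵀ Q u + vᵀ D v`. For a positive definite `P` we have
`‖u‖² ≤ ‖P⁻¹‖ uᵀ P u` (write `P⁻¹ = Bᵀ B`, evaluate at `w = P u` and use `‖Bᵀ B‖ = ‖B‖²`), so
`‖x‖² ≤ (‖Q⁻¹‖ + ‖D⁻¹‖) ⟪x', K x⟫ ≤ (‖Q⁻¹‖ + ‖D⁻¹‖) ‖x‖ ‖K x‖`, since `‖x'‖ = ‖x‖`.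
Hence `‖x‖ ≤ (‖Q⁻¹‖ + ‖D⁻¹‖) ‖K x‖` for all `x`, which makes `K` invertible with
`‖K⁻¹‖ ≤ ‖Q⁻¹‖ + ‖D⁻¹‖`.
-/

open Matrix WithLp
open scoped InnerProduct RealInnerProductSpace MatrixOrder

theorem ContinuousLinearMap.norm_adjoint_comp_self_apply_sq_le {E F : Type*}
    [NormedAddCommGroup E] [InnerProductSpace ℝ E] [CompleteSpace E]
    [NormedAddCommGroup F] [InnerProductSpace ℝ F] [CompleteSpace F] (T : E →L[ℝ] F) (w : E) :
    ‖(T† ∘L T) w‖ ^ 2 ≤ ‖T† ∘L T‖ * ⟪w, (T† ∘L T) w⟫ :=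
  calc ‖(T†) (T w)‖ ^ 2 ≤ (‖T†‖ * ‖T w‖) ^ 2 := by gcongr; exact T†.le_opNorm _
    _ = ‖T† ∘L T‖ * ⟪w, (T† ∘L T) w⟫ := by
      rw [norm_adjoint_comp_self, LinearIsometryEquiv.norm_map, comp_apply,
        adjoint_inner_right, real_inner_self_eq_norm_sq]
      ring

theorem EuclideanSpace.norm_toLp_sq {ι : Type*} [Fintype ι] (x : ι → ℝ) :
    ‖toLp 2 x‖ ^ 2 = x ⬝ᵥ x := by
  rw [← real_inner_self_eq_norm_sq, EuclideanSpace.inner_toLp_toLp, star_trivial]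

namespace Matrix

section PosDef

variable {ι : Type*} [Fintype ι] [DecidableEq ι]

theorem PosSemidef.norm_toEuclideanCLM_apply_sq_le {R : Matrix ι ι ℝ} (hR : R.PosSemidef)
    (w : EuclideanSpace ℝ ι) :
    ‖toEuclideanCLM (𝕜 := ℝ) R w‖ ^ 2 ≤
      ‖toEuclideanCLM (𝕜 := ℝ) R‖ * ⟪w, toEuclideanCLM (𝕜 := ℝ) R w⟫ := by
  obtain ⟨B, rfl⟩ := CStarAlgebra.nonneg_iff_eq_star_mul_self.mp hR.nonneg
  rw [map_mul, map_star]
  exact (toEuclideanCLM (𝕜 := ℝ) B).norm_adjoint_comp_self_apply_sq_le w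

theorem PosDef.dotProduct_self_le {P : Matrix ι ι ℝ} (hP : P.PosDef) (u : ι → ℝ) :
    u ⬝ᵥ u ≤ ‖toEuclideanCLM (𝕜 := ℝ) P⁻¹‖ * (u ⬝ᵥ P *ᵥ u) := by
  have hu : P⁻¹ *ᵥ (P *ᵥ u) = u := by
    rw [mulVec_mulVec, nonsing_inv_mul P ((isUnit_iff_isUnit_det P).mp hP.isUnit), one_mulVec]
  have := hP.inv.posSemidef.norm_toEuclideanCLM_apply_sq_le (toLp 2 (P *ᵥ u))
  rwa [toEuclideanCLM_toLp, hu, EuclideanSpace.norm_toLp_sq, EuclideanSpace.inner_toLp_toLp,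
    star_trivial] at this

end PosDef

section SaddlePoint

variable {ι κ : Type*} [Fintype ι] [Fintype κ]

theorem sumElim_neg_dotProduct_fromBlocks_mulVec (Q : Matrix ι ι ℝ) (D : Matrix κ κ ℝ)
    (G : Matrix κ ι ℝ) (u : ι → ℝ) (v : κ → ℝ) :
    Sum.elim u (-v) ⬝ᵥ fromBlocks Q Gᵀ G (-D) *ᵥ Sum.elim u v = u ⬝ᵥ Q *ᵥ u + v ⬝ᵥ D *ᵥ v := by
  have hG : u ⬝ᵥ Gᵀ *ᵥ v = v ⬝ᵥ G *ᵥ u := by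
    rw [dotProduct_mulVec, vecMul_transpose, dotProduct_comm]
  rw [fromBlocks_mulVec, sumElim_dotProduct_sumElim]
  simp only [Sum.elim_comp_inl, Sum.elim_comp_inr, dotProduct_add, neg_dotProduct, neg_mulVec,
    dotProduct_neg, hG]
  ring

variable [DecidableEq ι] [DecidableEq κ]

theorem norm_le_mul_norm_fromBlocks_mulVec {Q : Matrix ι ι ℝ} {D : Matrix κ κ ℝ}
    (hQ : Q.PosDef) (hD : D.PosDef) (G : Matrix κ ι ℝ) (x : ι ⊕ κ → ℝ) :
    ‖toLp 2 x‖ ≤ (‖toEuclideanCLM (𝕜 := ℝ) Q⁻¹‖ + ‖toEuclideanCLM (𝕜 := ℝ) D⁻¹‖) *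
      ‖toLp 2 (fromBlocks Q Gᵀ G (-D) *ᵥ x)‖ := by
  set a := ‖toEuclideanCLM (𝕜 := ℝ) Q⁻¹‖
  set b := ‖toEuclideanCLM (𝕜 := ℝ) D⁻¹‖
  set y := fromBlocks Q Gᵀ G (-D) *ᵥ x
  obtain ⟨u, v, rfl⟩ : ∃ u v, x = Sum.elim u v := ⟨_, _, (Sum.elim_comp_inl_inr x).symm⟩
  have hflip : ‖toLp 2 (Sum.elim u (-v))‖ = ‖toLp 2 (Sum.elim u v)‖ := by
    rw [← sq_eq_sq₀ (norm_nonneg _) (norm_nonneg _), EuclideanSpace.norm_toLp_sq,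
      EuclideanSpace.norm_toLp_sq, sumElim_dotProduct_sumElim, sumElim_dotProduct_sumElim,
      neg_dotProduct_neg]
  have key : ‖toLp 2 (Sum.elim u v)‖ ^ 2 ≤ (a + b) * (‖toLp 2 (Sum.elim u v)‖ * ‖toLp 2 y‖) :=
    calc ‖toLp 2 (Sum.elim u v)‖ ^ 2 = u ⬝ᵥ u + v ⬝ᵥ v := by
          rw [EuclideanSpace.norm_toLp_sq, sumElim_dotProduct_sumElim]
      _ ≤ a * (u ⬝ᵥ Q *ᵥ u) + b * (v ⬝ᵥ D *ᵥ v) :=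
          add_le_add (hQ.dotProduct_self_le u) (hD.dotProduct_self_le v)
      _ ≤ (a + b) * (u ⬝ᵥ Q *ᵥ u + v ⬝ᵥ D *ᵥ v) := by
          have hq : 0 ≤ u ⬝ᵥ Q *ᵥ u := hQ.posSemidef.dotProduct_mulVec_nonneg u
          have hd : 0 ≤ v ⬝ᵥ D *ᵥ v := hD.posSemidef.dotProduct_mulVec_nonneg v
          linarith [mul_nonneg (norm_nonneg _ : 0 ≤ a) hd, mul_nonneg (norm_nonneg _ : 0 ≤ b) hq]
      _ = (a + b) * ⟪toLp 2 y, toLp 2 (Sum.elim u (-v))⟫ := by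
          rw [EuclideanSpace.inner_toLp_toLp, star_trivial,
            sumElim_neg_dotProduct_fromBlocks_mulVec]
      _ ≤ (a + b) * (‖toLp 2 (Sum.elim u v)‖ * ‖toLp 2 y‖) := by
          rw [← hflip, mul_comm ‖_‖]
          exact mul_le_mul_of_nonneg_left (real_inner_le_norm _ _) (by positivity)
  rcases (norm_nonneg (toLp 2 (Sum.elim u v))).eq_or_lt with h | h
  · rw [← h]; positivity
  · nlinarith

end SaddlePoint

section InverseBound

variable {ι 𝕜 : Type*} [Fintype ι] [DecidableEq ι] [RCLike 𝕜] {A : Matrix ι ι 𝕜} {c : ℝ}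

theorem isUnit_of_forall_norm_le_mul_norm
    (h : ∀ x, ‖x‖ ≤ c * ‖toEuclideanCLM (𝕜 := 𝕜) A x‖) : IsUnit A := by
  rw [← mulVec_injective_iff_isUnit]
  intro x y hxy
  have := h (toLp 2 (x - y))
  rwa [toEuclideanCLM_toLp, mulVec_sub, hxy, sub_self, toLp_zero, norm_zero, mul_zero,
    norm_le_zero_iff, toLp_eq_zero, sub_eq_zero] at this

theorem norm_toEuclideanCLM_inv_le (hc : 0 ≤ c)
    (h : ∀ x, ‖x‖ ≤ c * ‖toEuclideanCLM (𝕜 := 𝕜) A x‖) :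
    ‖toEuclideanCLM (𝕜 := 𝕜) A⁻¹‖ ≤ c := by
  have hA : A * A⁻¹ = 1 :=
    mul_nonsing_inv A ((isUnit_iff_isUnit_det A).mp (isUnit_of_forall_norm_le_mul_norm h))
  refine ContinuousLinearMap.opNorm_le_bound _ hc fun y ↦ ?_
  simpa [← mul_apply_eq_comp, ← map_mul, hA] using h (toEuclideanCLM (𝕜 := 𝕜) A⁻¹ y)

end InverseBound

end Matrix

/-- the symmetric saddle-point matrix K = [[Q, G.transpose],[G, −D]] with Q, D symmetric
positive definite is invertible, and its spectral condition number satisfies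
cond₂(K) ≤ (‖Q⁻¹‖₂ + ‖D⁻¹‖₂)·‖K‖₂. -/
theorem stmt11 {n m : ℕ}
    (Q : Matrix (Fin n) (Fin n) ℝ) (hQ : Q.PosDef)
    (D : Matrix (Fin m) (Fin m) ℝ) (hD : D.PosDef)
    (G : Matrix (Fin m) (Fin n) ℝ)
    (K : Matrix (Fin n ⊕ Fin m) (Fin n ⊕ Fin m) ℝ)
    (hK : K = Matrix.fromBlocks Q G.transpose G (-D)) :
    IsUnit K ∧
    ‖Matrix.toEuclideanCLM (𝕜 := ℝ) K‖ * ‖Matrix.toEuclideanCLM (𝕜 := ℝ) K⁻¹‖ ≤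
      (‖Matrix.toEuclideanCLM (𝕜 := ℝ) Q⁻¹‖ + ‖Matrix.toEuclideanCLM (𝕜 := ℝ) D⁻¹‖) *
        ‖Matrix.toEuclideanCLM (𝕜 := ℝ) K‖ := by
  have hbound : ∀ x, ‖x‖ ≤ (‖toEuclideanCLM (𝕜 := ℝ) Q⁻¹‖ + ‖toEuclideanCLM (𝕜 := ℝ) D⁻¹‖) *
      ‖toEuclideanCLM (𝕜 := ℝ) K x‖ := fun x ↦ by
    rw [hK]
    exact norm_le_mul_norm_fromBlocks_mulVec hQ hD G x.ofLp
  refine ⟨isUnit_of_forall_norm_le_mul_norm hbound, ?_⟩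
  rw [mul_comm]
  gcongr
  exact norm_toEuclideanCLM_inv_le (by positivity) hbound
end
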